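/- The function t ↦ (1/t) ∫₀ᵗ Z_s Z_{t-s} / Z_t ds is decreasing on (0, ∞). -/

import Mathlib

open MeasureTheory Real Set intervalIntegral

/-!
Substituting `s = t u` turns the function into `t ↦ ∫₀¹ Z(tu) Z(t(1-u)) / Z(t) du`. By Hölder's
inequality `log Z` is convex on `[0, ∞)`, and for any convex `f` on `[0, ∞)` and `a + b = 1` the map
`t ↦ f(ta) + f(tb) - f(t)` is antitone, because the secant of `f` over `[t₁a, t₂a]` is no steeper
than over `[t₁, t₂]`. So every integrand `Z(tu) Z(t(1-u)) / Z(t)` decreases in `t`.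
-/

/-- Laplace transform of a measure on ℝ. -/
noncomputable def lapZ (μ : Measure ℝ) (t : ℝ) : ℝ := ∫ x, Real.exp (-t * x) ∂μ

theorem ConvexOn.slope_le_slope_of_le {s : Set ℝ} {f : ℝ → ℝ} (hf : ConvexOn ℝ s f)
    {x₁ x₂ y₁ y₂ : ℝ} (hx₁ : x₁ ∈ s) (hy₂ : y₂ ∈ s) (hx : x₁ < x₂) (hy : y₁ < y₂)
    (h₁ : x₁ ≤ y₁) (h₂ : x₂ ≤ y₂) :
    slope f x₁ x₂ ≤ slope f y₁ y₂ := by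
  have hx₂ : x₂ ∈ s := hf.1.ordConnected.out hx₁ hy₂ ⟨hx.le, h₂⟩
  have hy₁ : y₁ ∈ s := hf.1.ordConnected.out hx₁ hy₂ ⟨h₁, hy.le⟩
  calc slope f x₁ x₂ ≤ slope f x₁ y₂ :=
        hf.slope_mono hx₁ ⟨hx₂, hx.ne'⟩ ⟨hy₂, (hx.trans_le h₂).ne'⟩ h₂
    _ = slope f y₂ x₁ := slope_comm _ _ _
    _ ≤ slope f y₂ y₁ := hf.slope_mono hy₂ ⟨hx₁, (hx.trans_le h₂).ne⟩ ⟨hy₁, hy.ne⟩ h₁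
    _ = slope f y₁ y₂ := slope_comm _ _ _

theorem ConvexOn.sub_le_mul_sub {f : ℝ → ℝ} (hf : ConvexOn ℝ (Ici 0) f) {a t₁ t₂ : ℝ}
    (ha₀ : 0 ≤ a) (ha₁ : a ≤ 1) (ht₁ : 0 ≤ t₁) (ht : t₁ ≤ t₂) :
    f (t₂ * a) - f (t₁ * a) ≤ a * (f t₂ - f t₁) := by
  rcases ha₀.eq_or_lt with rfl | ha₀
  · simp
  rcases ht.eq_or_lt with rfl | ht
  · simp
  have hslope : slope f (t₁ * a) (t₂ * a) ≤ slope f t₁ t₂ :=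
    hf.slope_le_slope_of_le (mem_Ici.2 (by positivity)) (mem_Ici.2 (ht₁.trans ht.le))
      (by gcongr) ht (by nlinarith) (by nlinarith)
  rw [slope_def_field, slope_def_field, div_le_div_iff₀ (by nlinarith) (by linarith)] at hslope
  nlinarith

theorem ConvexOn.antitoneOn_add_sub {f : ℝ → ℝ} (hf : ConvexOn ℝ (Ici 0) f) {a b : ℝ}
    (ha : 0 ≤ a) (hb : 0 ≤ b) (hab : a + b = 1) :
    AntitoneOn (fun t => f (t * a) + f (t * b) - f t) (Ici 0) := by
  intro t₁ ht₁ t₂ _ ht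
  have hfa := hf.sub_le_mul_sub ha (by linarith) ht₁ ht
  have hfb := hf.sub_le_mul_sub hb (by linarith) ht₁ ht
  linear_combination (f t₂ - f t₁) * hab + hfa + hfb

theorem integral_rpow_mul_rpow_le {α : Type*} [MeasurableSpace α] {μ : Measure α}
    {f g : α → ℝ} (hf₀ : 0 ≤ᵐ[μ] f) (hg₀ : 0 ≤ᵐ[μ] g) (hf : Integrable f μ) (hg : Integrable g μ)
    {p q : ℝ} (hp : 0 ≤ p) (hq : 0 ≤ q) (hpq : p + q = 1) :
    ∫ x, f x ^ p * g x ^ q ∂μ ≤ (∫ x, f x ∂μ) ^ p * (∫ x, g x ∂μ) ^ q := by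
  have hholder := ENNReal.lintegral_mul_norm_pow_le hf.1.aemeasurable.ennreal_ofReal
    hg.1.aemeasurable.ennreal_ofReal hp hq hpq (μ := μ)
  have hofReal : (fun x => ENNReal.ofReal (f x ^ p * g x ^ q))
      =ᵐ[μ] fun x => ENNReal.ofReal (f x) ^ p * ENNReal.ofReal (g x) ^ q := by
    filter_upwards [hf₀, hg₀] with x hfx hgx
    rw [ENNReal.ofReal_mul (rpow_nonneg hfx p), ENNReal.ofReal_rpow_of_nonneg hfx hp,
      ENNReal.ofReal_rpow_of_nonneg hgx hq]
  have hfg₀ : 0 ≤ᵐ[μ] fun x => f x ^ p * g x ^ q := by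
    filter_upwards [hf₀, hg₀] with x hfx hgx
    exact mul_nonneg (rpow_nonneg hfx p) (rpow_nonneg hgx q)
  have hIf := integral_nonneg_of_ae hf₀
  have hIg := integral_nonneg_of_ae hg₀
  rw [lintegral_congr_ae hofReal.symm, ← ofReal_integral_eq_lintegral_ofReal hf hf₀,
    ← ofReal_integral_eq_lintegral_ofReal hg hg₀, ENNReal.ofReal_rpow_of_nonneg hIf hp,
    ENNReal.ofReal_rpow_of_nonneg hIg hq, ← ENNReal.ofReal_mul (rpow_nonneg hIf p)] at hholder
  rw [integral_eq_lintegral_of_nonneg_ae hfg₀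
    ((hf.1.aemeasurable.pow_const p).mul (hg.1.aemeasurable.pow_const q)).aestronglyMeasurable]
  exact ENNReal.toReal_le_of_le_ofReal (mul_nonneg (rpow_nonneg hIf p) (rpow_nonneg hIg q)) hholder

theorem exp_neg_mul_le_exp_mul_abs {c x s T : ℝ} (hx : c ≤ x) (hs : 0 ≤ s) (hsT : s ≤ T) :
    exp (-s * x) ≤ exp (T * |c|) := by
  refine exp_le_exp.2 ?_
  rcases le_total 0 x with hx₀ | hx₀
  · nlinarith [abs_nonneg c]
  · nlinarith [neg_abs_le c]

theorem one_div_mul_intervalIntegral_eq (g : ℝ → ℝ) {t : ℝ} (ht : t ≠ 0) :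
    (1 / t) * ∫ s in (0 : ℝ)..t, g s = ∫ u in (0 : ℝ)..1, g (t * u) := by
  rw [intervalIntegral.integral_comp_mul_left g ht, mul_zero, mul_one, smul_eq_mul, one_div]

section Laplace

variable {μ : Measure ℝ} [IsFiniteMeasure μ] {c : ℝ}

theorem integrable_exp_neg_mul (hc : ∀ᵐ x ∂μ, c ≤ x) {t : ℝ} (ht : 0 ≤ t) :
    Integrable (fun x => exp (-t * x)) μ :=
  (integrable_const (exp (t * |c|))).mono' (by fun_prop) <| by
    filter_upwards [hc] with x hx
    rw [norm_of_nonneg (exp_pos _).le]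
    exact exp_neg_mul_le_exp_mul_abs hx ht le_rfl

theorem lapZ_pos [NeZero μ] (hc : ∀ᵐ x ∂μ, c ≤ x) {t : ℝ} (ht : 0 ≤ t) :
    0 < lapZ μ t :=
  integral_exp_pos (integrable_exp_neg_mul hc ht)

theorem lapZ_mul_add_mul_le (hc : ∀ᵐ x ∂μ, c ≤ x) {s t a b : ℝ}
    (hs : 0 ≤ s) (ht : 0 ≤ t) (ha : 0 ≤ a) (hb : 0 ≤ b) (hab : a + b = 1) :
    lapZ μ (a * s + b * t) ≤ lapZ μ s ^ a * lapZ μ t ^ b := by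
  have hholder := integral_rpow_mul_rpow_le (f := fun x => exp (-s * x))
    (g := fun x => exp (-t * x)) (ae_of_all μ fun x => (exp_pos _).le)
    (ae_of_all μ fun x => (exp_pos _).le) (integrable_exp_neg_mul hc hs)
    (integrable_exp_neg_mul hc ht) ha hb hab
  calc lapZ μ (a * s + b * t) = ∫ x, exp (-s * x) ^ a * exp (-t * x) ^ b ∂μ := by
        refine integral_congr_ae (ae_of_all μ fun x => ?_)
        dsimp only
        rw [← exp_mul, ← exp_mul, ← exp_add]
        ring_nf
    _ ≤ lapZ μ s ^ a * lapZ μ t ^ b := hholder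

theorem convexOn_log_lapZ [NeZero μ] (hc : ∀ᵐ x ∂μ, c ≤ x) :
    ConvexOn ℝ (Ici 0) fun t => log (lapZ μ t) := by
  refine convexOn_iff_forall_pos.2 ⟨convex_Ici 0, fun s hs t ht a b ha hb hab => ?_⟩
  have hZs := lapZ_pos hc hs
  have hZt := lapZ_pos hc ht
  rw [smul_eq_mul, smul_eq_mul, smul_eq_mul, smul_eq_mul, ← log_rpow hZs, ← log_rpow hZt,
    ← log_mul (rpow_pos_of_pos hZs a).ne' (rpow_pos_of_pos hZt b).ne']
  exact log_le_log (lapZ_pos hc (add_nonneg (mul_nonneg ha.le hs) (mul_nonneg hb.le ht)))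
    (lapZ_mul_add_mul_le hc hs ht ha.le hb.le hab)

theorem continuousOn_lapZ_Icc (hc : ∀ᵐ x ∂μ, c ≤ x) (T : ℝ) :
    ContinuousOn (lapZ μ) (Icc 0 T) :=
  continuousOn_of_dominated (F := fun t x => exp (-t * x)) (fun _ _ => by fun_prop)
    (fun s hs => by
      filter_upwards [hc] with x hx
      rw [norm_of_nonneg (exp_pos _).le]
      exact exp_neg_mul_le_exp_mul_abs hx hs.1 hs.2)
    (integrable_const (exp (T * |c|))) (ae_of_all μ fun x => by fun_prop)

theorem continuousOn_lapZ (hc : ∀ᵐ x ∂μ, c ≤ x) :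
    ContinuousOn (lapZ μ) (Ici 0) := fun t ht =>
  (continuousOn_lapZ_Icc hc (t + 1) t ⟨ht, by linarith⟩).mono_of_mem_nhdsWithin
    (by rw [← Ici_inter_Iic]; exact inter_mem_nhdsWithin _ (Iic_mem_nhds (by linarith)))

theorem antitoneOn_lapZ_ratio [NeZero μ] (hc : ∀ᵐ x ∂μ, c ≤ x) {u : ℝ} (hu₀ : 0 ≤ u)
    (hu₁ : u ≤ 1) :
    AntitoneOn (fun t => lapZ μ (t * u) * lapZ μ (t - t * u) / lapZ μ t) (Ici 0) := by
  have hlog := (convexOn_log_lapZ hc).antitoneOn_add_sub hu₀ (sub_nonneg.2 hu₁)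
    (add_sub_cancel u 1)
  have hexp : ∀ t ∈ Ici (0 : ℝ), lapZ μ (t * u) * lapZ μ (t - t * u) / lapZ μ t
      = exp (log (lapZ μ (t * u)) + log (lapZ μ (t * (1 - u))) - log (lapZ μ t)) := by
    intro t (ht : 0 ≤ t)
    rw [exp_sub, exp_add, exp_log (lapZ_pos hc (by positivity)),
      exp_log (lapZ_pos hc (mul_nonneg ht (sub_nonneg.2 hu₁))), exp_log (lapZ_pos hc ht),
      mul_one_sub]
  intro t₁ ht₁ t₂ ht₂ ht
  simp only [hexp t₁ ht₁, hexp t₂ ht₂]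
  exact exp_le_exp.2 (hlog ht₁ ht₂ ht)

theorem intervalIntegrable_lapZ_ratio (hc : ∀ᵐ x ∂μ, c ≤ x) {t : ℝ} (ht : 0 ≤ t) :
    IntervalIntegrable (fun u => lapZ μ (t * u) * lapZ μ (t - t * u) / lapZ μ t) volume 0 1 := by
  refine ContinuousOn.intervalIntegrable_of_Icc zero_le_one ?_
  have hZ := continuousOn_lapZ hc
  refine ((hZ.comp (by fun_prop) fun u hu => ?_).mul
    (hZ.comp (by fun_prop) fun u hu => ?_)).div_const _
  · exact mul_nonneg ht hu.1
  · exact sub_nonneg.2 (mul_le_of_le_one_right ht hu.2)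

end Laplace

/-- The function `t ↦ (1/t) ∫₀ᵗ Z_s Z_{t-s} / Z_t ds` is decreasing on `(0, ∞)`. -/
theorem stmt_3 (μ : Measure ℝ) [IsProbabilityMeasure μ]
    (hbdd : ∃ c : ℝ, μ (Set.Iio c) = 0) :
    AntitoneOn (fun t => (1 / t) * ∫ s in (0:ℝ)..t, lapZ μ s * lapZ μ (t - s) / lapZ μ t)
      (Set.Ioi 0) := by
  obtain ⟨c, hc⟩ := hbdd
  have hc' : ∀ᵐ x ∂μ, c ≤ x := ae_iff.2 (by simp only [not_le]; exact hc)
  intro t₁ ht₁ t₂ ht₂ ht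
  dsimp only
  rw [one_div_mul_intervalIntegral_eq _ ht₁.ne', one_div_mul_intervalIntegral_eq _ ht₂.ne']
  exact integral_mono_on zero_le_one (intervalIntegrable_lapZ_ratio hc' ht₂.le)
    (intervalIntegrable_lapZ_ratio hc' ht₁.le) fun u hu =>
      antitoneOn_lapZ_ratio hc' hu.1 hu.2 (mem_Ici.2 ht₁.le) (mem_Ici.2 ht₂.le) ht
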